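/- arXiv:2604.04919 — 10 statements merged into one kernel-verified Lean document; each statement's English description precedes it below -/
import Mathlib

section
/- Let a11 be invertible and σ = a22 - a21 * a11⁻¹ * a12 its Schur complement. Then the map sending x : ext → ℝ to the vector (-(a11⁻¹ * a12).mulVec x, x) : (int ⊕ ext) → ℝ restricts to a linear equivalence from the kernel of σ.mulVecLin onto the kernel of S.mulVecLin. In particular, ker S ≅ ker σ as real vector spaces. -/
/-!
With `A` invertible, the first block row of `fromBlocks A B C D *ᵥ (u, x) = 0` forces
`u = -(A⁻¹ * B) *ᵥ x`, and substituting this into the second block row leaves exactly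
`(D - C * A⁻¹ * B) *ᵥ x = 0`. So the kernel of the block matrix is the image of the kernel of the
Schur complement under the injective map `x ↦ (-(A⁻¹ * B) *ᵥ x, x)`.
-/

open Matrix

namespace Matrix

variable {m n R : Type*} [Fintype n] [CommRing R]
  {A : Matrix m m R} {B : Matrix m n R} {C : Matrix n m R} {D : Matrix n n R}

theorem mulVecLin_fromRows_one_injective [DecidableEq n] (X : Matrix m n R) :
    Function.Injective (fromRows X (1 : Matrix n n R)).mulVecLin := fun x y hxy => by
  simpa [fromRows_mulVec] using congrArg (· ∘ Sum.inr) hxy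

theorem mulVec_add_eq_zero_iff_of_isUnit_det [Fintype m] [DecidableEq m] (hA : IsUnit A.det)
    (u : m → R) (x : n → R) :
    A *ᵥ u + B *ᵥ x = 0 ↔ u = -((A⁻¹ * B) *ᵥ x) := by
  constructor
  · intro h
    calc u = A⁻¹ *ᵥ A *ᵥ u := by rw [mulVec_mulVec, nonsing_inv_mul A hA, one_mulVec]
      _ = -((A⁻¹ * B) *ᵥ x) := by rw [eq_neg_of_add_eq_zero_left h, mulVec_neg, mulVec_mulVec]
  · rintro rfl
    rw [mulVec_neg, mulVec_mulVec, ← Matrix.mul_assoc, mul_nonsing_inv A hA, Matrix.one_mul,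
      neg_add_cancel]

theorem fromBlocks_mulVec_sumElim_eq_zero_iff [Fintype m] [DecidableEq m] (hA : IsUnit A.det)
    (u : m → R) (x : n → R) :
    fromBlocks A B C D *ᵥ Sum.elim u x = 0 ↔
      u = -((A⁻¹ * B) *ᵥ x) ∧ (D - C * A⁻¹ * B) *ᵥ x = 0 := by
  rw [fromBlocks_mulVec, Sum.elim_comp_inl, Sum.elim_comp_inr, ← Sum.elim_zero_zero,
    Sum.elim_eq_iff, mulVec_add_eq_zero_iff_of_isUnit_det hA]
  refine and_congr_right fun hu => ?_
  rw [hu, sub_mulVec, mulVec_neg, mulVec_mulVec, Matrix.mul_assoc, neg_add_eq_sub]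

theorem ker_fromBlocks_mulVecLin_eq_map [Fintype m] [DecidableEq m] [DecidableEq n]
    (hA : IsUnit A.det) :
    LinearMap.ker (fromBlocks A B C D).mulVecLin =
      (LinearMap.ker (D - C * A⁻¹ * B).mulVecLin).map
        (fromRows (-(A⁻¹ * B)) 1).mulVecLin := by
  ext y
  rw [← Sum.elim_comp_inl_inr y]
  simp only [LinearMap.mem_ker, mulVecLin_apply, Submodule.mem_map, fromRows_mulVec,
    Sum.elim_eq_iff, fromBlocks_mulVec_sumElim_eq_zero_iff hA, one_mulVec, neg_mulVec]
  constructor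
  · rintro ⟨hu, hx⟩
    exact ⟨_, hx, hu.symm, rfl⟩
  · rintro ⟨x, hx, hu, rfl⟩
    exact ⟨hu.symm, hx⟩

end Matrix

theorem schur_kernel_equiv
    {int ext : Type*} [Fintype int] [Fintype ext] [DecidableEq int] [DecidableEq ext]
    (a11 : Matrix int int ℝ) (a12 : Matrix int ext ℝ)
    (a21 : Matrix ext int ℝ) (a22 : Matrix ext ext ℝ)
    (h : IsUnit a11.det) :
    ∃ e : LinearMap.ker (a22 - a21 * a11⁻¹ * a12).mulVecLin ≃ₗ[ℝ]
        LinearMap.ker (Matrix.fromBlocks a11 a12 a21 a22).mulVecLin,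
      ∀ x : LinearMap.ker (a22 - a21 * a11⁻¹ * a12).mulVecLin,
        (e x : (int ⊕ ext) → ℝ) =
          Sum.elim (-((a11⁻¹ * a12).mulVec (x : ext → ℝ))) (x : ext → ℝ) := by
  refine ⟨(Submodule.equivMapOfInjective _ (mulVecLin_fromRows_one_injective _) _).trans
    (LinearEquiv.ofEq _ _ (ker_fromBlocks_mulVecLin_eq_map h).symm), fun x => ?_⟩
  simp [fromRows_mulVec, neg_mulVec]
end

section
/- Let a11 be invertible and σ = a22 - a21 * a11⁻¹ * a12 its Schur complement. Then there is a linear equivalence between the cokernel ((int ⊕ ext) → ℝ) / range(S.mulVecLin) and the cokernel (ext → ℝ) / range(σ.mulVecLin). -/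
/-!
The factorisation `S = L * fromBlocks a11 0 0 σ * U` with unitriangular `L`, `U` gives
`rank S = |int| + rank σ`. Both cokernels are finite dimensional with dimension "number of rows
minus rank", namely `|int| + |ext| - rank S` and `|ext| - rank σ`, which agree, so they are
isomorphic.
-/

open Matrix

open Module in
theorem LinearMap.finrank_range_prodMap {K M N M' N' : Type*} [Field K]
    [AddCommGroup M] [Module K M] [AddCommGroup N] [Module K N]
    [AddCommGroup M'] [Module K M'] [AddCommGroup N'] [Module K N']
    [FiniteDimensional K M'] [FiniteDimensional K N'] (f : M →ₗ[K] M') (g : N →ₗ[K] N') :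
    finrank K (f.prodMap g).range = finrank K f.range + finrank K g.range := by
  have hinj : Function.Injective (f.range.subtype.prodMap g.range.subtype) :=
    Function.Injective.prodMap f.range.injective_subtype g.range.injective_subtype
  rw [range_prodMap, ← f.range.range_subtype, ← g.range.range_subtype, ← range_prodMap,
    finrank_range_of_inj hinj, finrank_prod, Submodule.range_subtype, Submodule.range_subtype]

namespace Matrix

variable {K : Type*} [Field K] {m n m' n' : Type*} [Fintype n] [Fintype n']

theorem mulVecLin_fromBlocks_zero_zero (A : Matrix m n K) (D : Matrix m' n' K) :
    (fromBlocks A 0 0 D).mulVecLin =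
      (LinearEquiv.sumArrowLequivProdArrow m m' K K).symm.toLinearMap ∘ₗ
        A.mulVecLin.prodMap D.mulVecLin ∘ₗ
          (LinearEquiv.sumArrowLequivProdArrow n n' K K).toLinearMap := by
  ext x (i | i) <;>
    simp [fromBlocks_mulVec, LinearEquiv.sumArrowLequivProdArrow, Equiv.sumArrowEquivProdArrow]

theorem rank_fromBlocks_zero_zero [Finite m] [Finite m'] (A : Matrix m n K) (D : Matrix m' n' K) :
    (fromBlocks A 0 0 D).rank = A.rank + D.rank := by
  rw [rank, mulVecLin_fromBlocks_zero_zero, LinearMap.range_comp, LinearEquiv.range_comp,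
    LinearEquiv.finrank_map_eq, LinearMap.finrank_range_prodMap, rank, rank]

theorem rank_fromBlocks_of_isUnit_det₁₁ [Fintype m] [DecidableEq m] [Fintype m']
    (A : Matrix m m K) (B : Matrix m n' K) (C : Matrix m' m K) (D : Matrix m' n' K)
    (hA : IsUnit A.det) :
    (fromBlocks A B C D).rank = Fintype.card m + (D - C * A⁻¹ * B).rank := by
  classical
  have := invertibleOfIsUnitDet A hA
  have hL : IsUnit (fromBlocks 1 0 (C * ⅟A) 1 : Matrix (m ⊕ m') (m ⊕ m') K).det := by simp
  have hU : IsUnit (fromBlocks 1 (⅟A * B) 0 1 : Matrix (m ⊕ n') (m ⊕ n') K).det := by simp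
  rw [fromBlocks_eq_of_invertible₁₁, rank_mul_eq_left_of_isUnit_det _ _ hU,
    rank_mul_eq_right_of_isUnit_det _ _ hL, rank_fromBlocks_zero_zero, invOf_eq_nonsing_inv,
    rank_of_isUnit A ((isUnit_iff_isUnit_det A).mpr hA)]

theorem finrank_quotient_range_mulVecLin [Fintype m] (A : Matrix m n K) :
    Module.finrank K ((m → K) ⧸ LinearMap.range A.mulVecLin) = Fintype.card m - A.rank := by
  have := (LinearMap.range A.mulVecLin).finrank_quotient_add_finrank
  rw [Module.finrank_fintype_fun_eq_card] at this
  rw [rank]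
  omega

end Matrix

theorem schur_cokernel_equiv_general
    {int ext : Type*} [Fintype int] [Fintype ext] [DecidableEq int]
    (a11 : Matrix int int ℝ) (a12 : Matrix int ext ℝ)
    (a21 : Matrix ext int ℝ) (a22 : Matrix ext ext ℝ)
    (h : IsUnit a11.det) :
    Nonempty
      ((((int ⊕ ext) → ℝ) ⧸ LinearMap.range (Matrix.fromBlocks a11 a12 a21 a22).mulVecLin)
        ≃ₗ[ℝ] ((ext → ℝ) ⧸ LinearMap.range (a22 - a21 * a11⁻¹ * a12).mulVecLin)) := by
  apply FiniteDimensional.nonempty_linearEquiv_of_finrank_eq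
  rw [finrank_quotient_range_mulVecLin, finrank_quotient_range_mulVecLin,
    rank_fromBlocks_of_isUnit_det₁₁ a11 a12 a21 a22 h, Fintype.card_sum, Nat.add_sub_add_left]

theorem schur_cokernel_equiv
    {int ext : Type*} [Fintype int] [Fintype ext] [DecidableEq int] [DecidableEq ext]
    (a11 : Matrix int int ℝ) (a12 : Matrix int ext ℝ)
    (a21 : Matrix ext int ℝ) (a22 : Matrix ext ext ℝ)
    (h : IsUnit a11.det) :
    Nonempty
      ((((int ⊕ ext) → ℝ) ⧸ LinearMap.range (Matrix.fromBlocks a11 a12 a21 a22).mulVecLin)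
        ≃ₗ[ℝ] ((ext → ℝ) ⧸ LinearMap.range (a22 - a21 * a11⁻¹ * a12).mulVecLin)) :=
  schur_cokernel_equiv_general a11 a12 a21 a22 h
end

section
/- Let a11 be invertible and σ = a22 - a21 * a11⁻¹ * a12 its Schur complement. Then the rank of S equals the cardinality of int plus the rank of σ, i.e. S.rank = Fintype.card int + σ.rank. -/
/-!
Block Gaussian elimination factors `fromBlocks a11 a12 a21 a22` as
`fromBlocks 1 0 (a21 * a11⁻¹) 1 * fromBlocks a11 0 0 σ * fromBlocks 1 (a11⁻¹ * a12) 0 1`.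
The outer factors are unitriangular, hence invertible and rank-preserving, and the rank of a
block-diagonal matrix is the sum of the ranks of its blocks, with `rank a11 = card int`.
-/

open Matrix

theorem Submodule.finrank_prod {K M N : Type*} [DivisionRing K] [AddCommGroup M] [Module K M]
    [AddCommGroup N] [Module K N] (p : Submodule K M) (q : Submodule K N)
    [FiniteDimensional K p] [FiniteDimensional K q] :
    Module.finrank K (p.prod q) = Module.finrank K p + Module.finrank K q := by
  have hrange : p.prod q = (p.subtype.prodMap q.subtype).range := by simp
  rw [hrange, LinearMap.finrank_range_of_inj (Prod.map_injective.2
    ⟨p.injective_subtype, q.injective_subtype⟩), Module.finrank_prod]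

theorem Matrix.rank_fromBlocks_zero₁₂_zero₂₁ {K l m n o : Type*} [Field K]
    [Fintype m] [Fintype n]
    (A : Matrix l m K) (D : Matrix o n K) :
    (fromBlocks A 0 0 D).rank = A.rank + D.rank := by
  have hconj : (fromBlocks A 0 0 D).mulVecLin =
      (LinearEquiv.sumArrowLequivProdArrow l o K K).symm.toLinearMap ∘ₗ
        A.mulVecLin.prodMap D.mulVecLin ∘ₗ
          (LinearEquiv.sumArrowLequivProdArrow m n K K).toLinearMap := by
    ext x (i | i) <;> simp [fromBlocks_mulVec] <;> rfl
  rw [rank, hconj, LinearMap.range_comp,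
    LinearMap.range_comp_of_range_eq_top _ (LinearEquiv.range _), LinearEquiv.finrank_map_eq,
    LinearMap.range_prodMap, Submodule.finrank_prod, rank, rank]

theorem schur_rank_general
    {int ext : Type*} [Fintype int] [Fintype ext] [DecidableEq int]
    (a11 : Matrix int int ℝ) (a12 : Matrix int ext ℝ)
    (a21 : Matrix ext int ℝ) (a22 : Matrix ext ext ℝ)
    (h : IsUnit a11.det) :
    (Matrix.fromBlocks a11 a12 a21 a22).rank =
      Fintype.card int + (a22 - a21 * a11⁻¹ * a12).rank := by
  classical
  let _ : Invertible a11 := a11.invertibleOfIsUnitDet h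
  have hlower : IsUnit (fromBlocks 1 0 (a21 * ⅟a11) (1 : Matrix ext ext ℝ)).det := by simp
  have hupper : IsUnit (fromBlocks 1 (⅟a11 * a12) 0 (1 : Matrix ext ext ℝ)).det := by simp
  rw [fromBlocks_eq_of_invertible₁₁, rank_mul_eq_left_of_isUnit_det _ _ hupper,
    rank_mul_eq_right_of_isUnit_det _ _ hlower, rank_fromBlocks_zero₁₂_zero₂₁,
    rank_of_isUnit _ (isUnit_of_invertible a11), invOf_eq_nonsing_inv]

theorem schur_rank
    {int ext : Type*} [Fintype int] [Fintype ext] [DecidableEq int] [DecidableEq ext]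
    (a11 : Matrix int int ℝ) (a12 : Matrix int ext ℝ)
    (a21 : Matrix ext int ℝ) (a22 : Matrix ext ext ℝ)
    (h : IsUnit a11.det) :
    (Matrix.fromBlocks a11 a12 a21 a22).rank =
      Fintype.card int + (a22 - a21 * a11⁻¹ * a12).rank :=
  schur_rank_general a11 a12 a21 a22 h
end

section
/- Assume the compatibility conditions ker a11 ≤ ker a21 and range a12 ≤ range a11. Then there exists a unique linear map σ : V2 →ₗ[ℝ] W2 such that for every x : V2 and every y : V1 with a11 y = a12 x, one has σ x = a22 x - a21 y. (In particular the value a22 x - a21 y does not depend on the choice of the lift y of a12 x through a11.) -/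
/-! The lift `y` of `a12 x` through `a11` is determined up to `ker a11`, which `a21` kills, so
`a21 y` depends only on `a12 x`: `a21` factors through `range a11` (first isomorphism theorem),
and composing with `a12 : V2 → range a11` gives the linear map `x ↦ a21 y`. Uniqueness holds
because every `x` has a lift. -/

namespace LinearMap

variable {R M N P Q : Type*} [Ring R] [AddCommGroup M] [Module R M] [AddCommGroup N] [Module R N]
  [AddCommGroup P] [Module R P] [AddCommGroup Q] [Module R Q]

noncomputable def factorThroughRange (f : M →ₗ[R] N) (g : M →ₗ[R] P) (h : ker f ≤ ker g) :
    range f →ₗ[R] P :=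
  (ker f).liftQ g h ∘ₗ f.quotKerEquivRange.symm.toLinearMap

theorem factorThroughRange_apply_of_eq {f : M →ₗ[R] N} {g : M →ₗ[R] P} (h : ker f ≤ ker g)
    (z : range f) {y : M} (hy : f y = z) : factorThroughRange f g h z = g y := by
  obtain ⟨z, hz⟩ := z
  subst hy
  simp [factorThroughRange]

/-- The generalized Schur complement `a22 - a21 a11⁻¹ a12` of the block operator
`[[a11, a12], [a21, a22]]`. -/
noncomputable def schurComplement (a11 : M →ₗ[R] N) (a12 : Q →ₗ[R] N) (a21 : M →ₗ[R] P)
    (a22 : Q →ₗ[R] P) (hker : ker a11 ≤ ker a21) (hran : range a12 ≤ range a11) :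
    Q →ₗ[R] P :=
  a22 - factorThroughRange a11 a21 hker ∘ₗ a12.codRestrict (range a11) fun x => hran ⟨x, rfl⟩

theorem schurComplement_apply_of_eq {a11 : M →ₗ[R] N} {a12 : Q →ₗ[R] N} {a21 : M →ₗ[R] P}
    (a22 : Q →ₗ[R] P) (hker : ker a11 ≤ ker a21) (hran : range a12 ≤ range a11)
    {x : Q} {y : M} (hy : a11 y = a12 x) :
    schurComplement a11 a12 a21 a22 hker hran x = a22 x - a21 y := by
  simp only [schurComplement, sub_apply, comp_apply]
  rw [factorThroughRange_apply_of_eq hker _ hy]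

end LinearMap

open LinearMap in
theorem generalized_schur_exists_unique
    {V1 V2 W1 W2 : Type*}
    [AddCommGroup V1] [Module ℝ V1] [AddCommGroup V2] [Module ℝ V2]
    [AddCommGroup W1] [Module ℝ W1] [AddCommGroup W2] [Module ℝ W2]
    (a11 : V1 →ₗ[ℝ] W1) (a12 : V2 →ₗ[ℝ] W1)
    (a21 : V1 →ₗ[ℝ] W2) (a22 : V2 →ₗ[ℝ] W2)
    (hker : LinearMap.ker a11 ≤ LinearMap.ker a21)
    (hran : LinearMap.range a12 ≤ LinearMap.range a11) :
    ∃! σ : V2 →ₗ[ℝ] W2, ∀ (x : V2) (y : V1), a11 y = a12 x → σ x = a22 x - a21 y := by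
  refine ⟨schurComplement a11 a12 a21 a22 hker hran,
    fun x y hy => schurComplement_apply_of_eq a22 hker hran hy, fun τ hτ => ?_⟩
  ext x
  obtain ⟨y, hy⟩ := hran ⟨x, rfl⟩
  rw [hτ x y hy, schurComplement_apply_of_eq a22 hker hran hy]
end

section
/- Assume ker a11 ≤ ker a21. If g, g' : W1 →ₗ[ℝ] V1 are two linear maps satisfying a11 ∘ g ∘ a12 = a12 and a11 ∘ g' ∘ a12 = a12, then a21 ∘ g ∘ a12 = a21 ∘ g' ∘ a12. Consequently the generalized Schur complement σ = a22 - a21 ∘ g ∘ a12 does not depend on the choice of such g. -/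
namespace LinearMap

variable {R M N P Q : Type*} [Ring R] [AddCommGroup M] [AddCommGroup N] [AddCommGroup P]
  [AddCommGroup Q] [Module R M] [Module R N] [Module R P] [Module R Q]

theorem comp_eq_comp_of_ker_le {f : M →ₗ[R] N} {h : M →ₗ[R] P} (hker : ker f ≤ ker h)
    {u u' : Q →ₗ[R] M} (hu : f ∘ₗ u = f ∘ₗ u') : h ∘ₗ u = h ∘ₗ u' := by
  rw [← sub_eq_zero, ← comp_sub, ← range_le_ker_iff] at hu ⊢
  exact hu.trans hker

end LinearMap

theorem generalized_schur_independent_of_inverse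
    {V1 V2 W1 W2 : Type*}
    [AddCommGroup V1] [Module ℝ V1] [AddCommGroup V2] [Module ℝ V2]
    [AddCommGroup W1] [Module ℝ W1] [AddCommGroup W2] [Module ℝ W2]
    (a11 : V1 →ₗ[ℝ] W1) (a12 : V2 →ₗ[ℝ] W1)
    (a21 : V1 →ₗ[ℝ] W2) (a22 : V2 →ₗ[ℝ] W2)
    (hker : LinearMap.ker a11 ≤ LinearMap.ker a21)
    (g g' : W1 →ₗ[ℝ] V1)
    (hg : a11 ∘ₗ g ∘ₗ a12 = a12) (hg' : a11 ∘ₗ g' ∘ₗ a12 = a12) :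
    a21 ∘ₗ g ∘ₗ a12 = a21 ∘ₗ g' ∘ₗ a12 ∧
      a22 - a21 ∘ₗ g ∘ₗ a12 = a22 - a21 ∘ₗ g' ∘ₗ a12 := by
  have h : a21 ∘ₗ g ∘ₗ a12 = a21 ∘ₗ g' ∘ₗ a12 :=
    LinearMap.comp_eq_comp_of_ker_le hker (hg.trans hg'.symm)
  exact ⟨h, by rw [h]⟩
end

section
/- Assume the compatibility conditions ker a11 ≤ ker a21 and range a12 ≤ range a11, and let g : W1 →ₗ[ℝ] V1 satisfy a11 ∘ g ∘ a11 = a11. Set σ = a22 - a21 ∘ g ∘ a12. Then there exist linear automorphisms e : (V1 × V2) ≃ₗ[ℝ] (V1 × V2) and f : (W1 × W2) ≃ₗ[ℝ] (W1 × W2) such that f ∘ S ∘ e = LinearMap.prodMap a11 σ, where S is the block linear map S(v1, v2) = (a11 v1 + a12 v2, a21 v1 + a22 v2). That is, S is isomorphic in the arrow category to the direct sum a11 ⊕ σ. -/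
/-!
The generalized inverse `g` clears both off-diagonal blocks. The column operation
`(v₁, v₂) ↦ (v₁ - g a₁₂ v₂, v₂)` kills `a₁₂`, because `a₁₁ g a₁₂ = a₁₂` by the range condition;
the row operation `(w₁, w₂) ↦ (w₁, w₂ - a₂₁ g w₁)` then kills `a₂₁`, because `a₂₁ g a₁₁ = a₂₁` by the
kernel condition. What remains in the corner is the Schur complement `a₂₂ - a₂₁ g a₁₂`.
-/

section

variable {R V₁ V₂ W₁ W₂ : Type*} [Ring R]
  [AddCommGroup V₁] [Module R V₁] [AddCommGroup V₂] [Module R V₂]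
  [AddCommGroup W₁] [Module R W₁] [AddCommGroup W₂] [Module R W₂]

namespace LinearEquiv

def shearSnd (k : V₁ →ₗ[R] V₂) : (V₁ × V₂) ≃ₗ[R] V₁ × V₂ :=
  (refl R V₁).skewProd (refl R V₂) k

@[simp]
theorem shearSnd_apply (k : V₁ →ₗ[R] V₂) (x : V₁ × V₂) : shearSnd k x = (x.1, x.2 + k x.1) :=
  rfl

def shearFst (h : V₂ →ₗ[R] V₁) : (V₁ × V₂) ≃ₗ[R] V₁ × V₂ :=
  (prodComm R V₁ V₂).trans ((shearSnd h).trans (prodComm R V₂ V₁))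

@[simp]
theorem shearFst_apply (h : V₂ →ₗ[R] V₁) (x : V₁ × V₂) : shearFst h x = (x.1 + h x.2, x.2) :=
  rfl

end LinearEquiv

namespace LinearMap

theorem comp_comp_eq_of_range_le {U : Type*} [AddCommGroup U] [Module R U]
    {a : V₁ →ₗ[R] W₁} {g : W₁ →ₗ[R] V₁} (hg : a ∘ₗ g ∘ₗ a = a) {b : U →ₗ[R] W₁}
    (hb : range b ≤ range a) : a ∘ₗ g ∘ₗ b = b := by
  ext u
  obtain ⟨v, hv⟩ := hb (mem_range_self b u)
  simpa [← hv] using LinearMap.congr_fun hg v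

theorem comp_comp_eq_of_ker_le {X : Type*} [AddCommGroup X] [Module R X]
    {a : V₁ →ₗ[R] W₁} {g : W₁ →ₗ[R] V₁} (hg : a ∘ₗ g ∘ₗ a = a) {c : V₁ →ₗ[R] X}
    (hc : ker a ≤ ker c) : c ∘ₗ g ∘ₗ a = c := by
  ext v
  have hker : g (a v) - v ∈ ker a := by simpa [sub_eq_zero] using LinearMap.congr_fun hg v
  simpa [sub_eq_zero] using hc hker

variable (a₁₁ : V₁ →ₗ[R] W₁) (a₁₂ : V₂ →ₗ[R] W₁) (a₂₁ : V₁ →ₗ[R] W₂) (a₂₂ : V₂ →ₗ[R] W₂)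

theorem prod_coprod_comp_shearFst (h : V₂ →ₗ[R] V₁) :
    (a₁₁.coprod a₁₂).prod (a₂₁.coprod a₂₂) ∘ₗ (LinearEquiv.shearFst h).toLinearMap =
      (a₁₁.coprod (a₁₂ + a₁₁ ∘ₗ h)).prod (a₂₁.coprod (a₂₂ + a₂₁ ∘ₗ h)) := by
  ext <;> simp [add_comm]

theorem shearSnd_comp_prod_coprod (k : W₁ →ₗ[R] W₂) :
    (LinearEquiv.shearSnd k).toLinearMap ∘ₗ (a₁₁.coprod a₁₂).prod (a₂₁.coprod a₂₂) =
      (a₁₁.coprod a₁₂).prod ((a₂₁ + k ∘ₗ a₁₁).coprod (a₂₂ + k ∘ₗ a₁₂)) := by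
  ext <;> simp

theorem prodMap_eq_prod_coprod :
    prodMap a₁₁ a₂₂ = (a₁₁.coprod 0).prod ((0 : V₁ →ₗ[R] W₂).coprod a₂₂) := by
  ext <;> simp

end LinearMap

end

theorem generalized_schur_arrow_decomposition
    {V1 V2 W1 W2 : Type*}
    [AddCommGroup V1] [Module ℝ V1] [AddCommGroup V2] [Module ℝ V2]
    [AddCommGroup W1] [Module ℝ W1] [AddCommGroup W2] [Module ℝ W2]
    (a11 : V1 →ₗ[ℝ] W1) (a12 : V2 →ₗ[ℝ] W1)
    (a21 : V1 →ₗ[ℝ] W2) (a22 : V2 →ₗ[ℝ] W2)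
    (hker : LinearMap.ker a11 ≤ LinearMap.ker a21)
    (hran : LinearMap.range a12 ≤ LinearMap.range a11)
    (g : W1 →ₗ[ℝ] V1) (hg : a11 ∘ₗ g ∘ₗ a11 = a11) :
    ∃ (e : (V1 × V2) ≃ₗ[ℝ] (V1 × V2)) (f : (W1 × W2) ≃ₗ[ℝ] (W1 × W2)),
      f.toLinearMap ∘ₗ ((a11.coprod a12).prod (a21.coprod a22)) ∘ₗ e.toLinearMap =
        LinearMap.prodMap a11 (a22 - a21 ∘ₗ g ∘ₗ a12) := by
  have hcol : a11 ∘ₗ g ∘ₗ a12 = a12 := LinearMap.comp_comp_eq_of_range_le hg hran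
  have hrow : a21 ∘ₗ g ∘ₗ a11 = a21 := LinearMap.comp_comp_eq_of_ker_le hg hker
  refine ⟨LinearEquiv.shearFst (-(g ∘ₗ a12)), LinearEquiv.shearSnd (-(a21 ∘ₗ g)), ?_⟩
  rw [LinearMap.prod_coprod_comp_shearFst, LinearMap.shearSnd_comp_prod_coprod,
    LinearMap.prodMap_eq_prod_coprod]
  congr 2 <;> simp [LinearMap.comp_assoc, hcol, hrow, sub_eq_add_neg]
end

section
/- Assume the compatibility conditions ker a11 ≤ ker a21 and range a12 ≤ range a11, and let g : W1 →ₗ[ℝ] V1 satisfy a11 ∘ g ∘ a11 = a11. Set σ = a22 - a21 ∘ g ∘ a12. Then there is a linear equivalence ker S ≃ₗ[ℝ] (ker a11) × (ker σ), where S is the block linear map S(v1, v2) = (a11 v1 + a12 v2, a21 v1 + a22 v2). -/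
/-! The shear `(v₁, v₂) ↦ (v₁ + g (a₁₂ v₂), v₂)` carries `ker S` onto `ker a₁₁ × ker σ`.
Because `range a₁₂ ≤ range a₁₁` and `g` is a generalized inverse of `a₁₁`, we have
`a₁₁ ∘ g ∘ a₁₂ = a₁₂`, so the first row of `S v = 0` says the sheared first coordinate `u` lies in
`ker a₁₁`. The second row reads `a₂₁ u + σ v₂ = 0`, and `a₂₁ u = 0` since `ker a₁₁ ≤ ker a₂₁`. -/

section

variable {R M₁ M₂ N₁ N₂ : Type*} [Ring R]
  [AddCommGroup M₁] [Module R M₁] [AddCommGroup M₂] [Module R M₂]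
  [AddCommGroup N₁] [Module R N₁] [AddCommGroup N₂] [Module R N₂]

def Submodule.prodEquiv (p : Submodule R M₁) (q : Submodule R M₂) : p.prod q ≃ₗ[R] p × q where
  toFun x := (⟨x.1.1, x.2.1⟩, ⟨x.1.2, x.2.2⟩)
  invFun x := ⟨(x.1.1, x.2.1), x.1.2, x.2.2⟩
  map_add' _ _ := rfl
  map_smul' _ _ := rfl
  left_inv _ := rfl
  right_inv _ := rfl

def LinearEquiv.shear (f : M₂ →ₗ[R] M₁) : (M₁ × M₂) ≃ₗ[R] M₁ × M₂ where
  toFun p := (p.1 + f p.2, p.2)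
  invFun p := (p.1 - f p.2, p.2)
  map_add' p q := by simp [add_add_add_comm]
  map_smul' c p := by simp
  left_inv p := by simp
  right_inv p := by simp

theorem LinearMap.comp_comp_eq_of_range_le_s9 {a : M₁ →ₗ[R] N₁} {b : M₂ →ₗ[R] N₁} {g : N₁ →ₗ[R] M₁}
    (hg : a ∘ₗ g ∘ₗ a = a) (hran : LinearMap.range b ≤ LinearMap.range a) :
    a ∘ₗ g ∘ₗ b = b := by
  ext v
  obtain ⟨x, hx⟩ := hran (LinearMap.mem_range_self b v)
  simpa [← hx] using LinearMap.congr_fun hg x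

theorem mem_ker_block_iff {a11 : M₁ →ₗ[R] N₁} {a12 : M₂ →ₗ[R] N₁} {a21 : M₁ →ₗ[R] N₂}
    {a22 : M₂ →ₗ[R] N₂} {g : N₁ →ₗ[R] M₁}
    (hker : LinearMap.ker a11 ≤ LinearMap.ker a21) (hg : a11 ∘ₗ g ∘ₗ a12 = a12) (v : M₁ × M₂) :
    v ∈ LinearMap.ker ((a11.coprod a12).prod (a21.coprod a22)) ↔
      v.1 + g (a12 v.2) ∈ LinearMap.ker a11 ∧ v.2 ∈ LinearMap.ker (a22 - a21 ∘ₗ g ∘ₗ a12) := by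
  have row₁ : a11 v.1 + a12 v.2 = a11 (v.1 + g (a12 v.2)) := by
    rw [map_add, ← LinearMap.comp_apply, ← LinearMap.comp_apply, LinearMap.comp_assoc, hg]
  have row₂ : a21 v.1 + a22 v.2 =
      a21 (v.1 + g (a12 v.2)) + (a22 - a21 ∘ₗ g ∘ₗ a12) v.2 := by
    simp only [map_add, LinearMap.sub_apply, LinearMap.comp_apply]
    abel
  have hS : (a11.coprod a12).prod (a21.coprod a22) v =
      (a11 v.1 + a12 v.2, a21 v.1 + a22 v.2) := rfl
  rw [LinearMap.mem_ker, hS, Prod.mk_eq_zero, row₁, row₂, LinearMap.mem_ker, LinearMap.mem_ker]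
  refine and_congr_right fun hu => ?_
  rw [show a21 (v.1 + g (a12 v.2)) = 0 from hker hu, zero_add]

theorem ker_block_eq_comap_shear {a11 : M₁ →ₗ[R] N₁} {a12 : M₂ →ₗ[R] N₁} {a21 : M₁ →ₗ[R] N₂}
    {a22 : M₂ →ₗ[R] N₂} {g : N₁ →ₗ[R] M₁}
    (hker : LinearMap.ker a11 ≤ LinearMap.ker a21) (hg : a11 ∘ₗ g ∘ₗ a12 = a12) :
    LinearMap.ker ((a11.coprod a12).prod (a21.coprod a22)) =
      ((LinearMap.ker a11).prod (LinearMap.ker (a22 - a21 ∘ₗ g ∘ₗ a12))).comap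
        (LinearEquiv.shear (g ∘ₗ a12) : M₁ × M₂ →ₗ[R] M₁ × M₂) := by
  ext v
  exact mem_ker_block_iff hker hg v

end

theorem generalized_schur_kernel_equiv
    {V1 V2 W1 W2 : Type*}
    [AddCommGroup V1] [Module ℝ V1] [AddCommGroup V2] [Module ℝ V2]
    [AddCommGroup W1] [Module ℝ W1] [AddCommGroup W2] [Module ℝ W2]
    (a11 : V1 →ₗ[ℝ] W1) (a12 : V2 →ₗ[ℝ] W1)
    (a21 : V1 →ₗ[ℝ] W2) (a22 : V2 →ₗ[ℝ] W2)
    (hker : LinearMap.ker a11 ≤ LinearMap.ker a21)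
    (hran : LinearMap.range a12 ≤ LinearMap.range a11)
    (g : W1 →ₗ[ℝ] V1) (hg : a11 ∘ₗ g ∘ₗ a11 = a11) :
    Nonempty
      (LinearMap.ker ((a11.coprod a12).prod (a21.coprod a22)) ≃ₗ[ℝ]
        LinearMap.ker a11 × LinearMap.ker (a22 - a21 ∘ₗ g ∘ₗ a12)) := by
  set e := LinearEquiv.shear (g ∘ₗ a12)
  have hmap : (LinearMap.ker ((a11.coprod a12).prod (a21.coprod a22))).map (e : V1 × V2 →ₗ[ℝ] _) =
      (LinearMap.ker a11).prod (LinearMap.ker (a22 - a21 ∘ₗ g ∘ₗ a12)) := by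
    rw [ker_block_eq_comap_shear hker (LinearMap.comp_comp_eq_of_range_le_s9 hg hran),
      Submodule.map_comap_eq_of_surjective e.surjective]
  exact ⟨(e.ofSubmodules _ _ hmap).trans (Submodule.prodEquiv _ _)⟩
end

section
/- Assume the compatibility conditions ker a11 ≤ ker a21 and range a12 ≤ range a11, and let g : W1 →ₗ[ℝ] V1 satisfy a11 ∘ g ∘ a11 = a11. Set σ = a22 - a21 ∘ g ∘ a12. Then there is a linear equivalence between the cokernel (W1 × W2) / range S and the product of cokernels (W1 / range a11) × (W2 / range σ), where S is the block linear map S(v1, v2) = (a11 v1 + a12 v2, a21 v1 + a22 v2). -/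
/-!
Subtracting `a21 ∘ g` times the first row from the second is an automorphism of `W1 × W2`.
Since `a21 ∘ g ∘ a11 = a21` (from `a11 ∘ g ∘ a11 = a11` and `ker a11 ≤ ker a21`), it turns `S`
into the block upper triangular map `[[a11, a12], [0, σ]]`, whose range is
`range a11 × range σ` because `range a12 ≤ range a11`.
-/

namespace Submodule

variable {R M N : Type*} [Ring R] [AddCommGroup M] [Module R M] [AddCommGroup N] [Module R N]

noncomputable def quotientProdEquiv (p : Submodule R M) (q : Submodule R N) :
    ((M × N) ⧸ p.prod q) ≃ₗ[R] (M ⧸ p) × (N ⧸ q) :=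
  have hker : LinearMap.ker (p.mkQ.prodMap q.mkQ) = p.prod q := by
    rw [LinearMap.ker_prodMap, ker_mkQ, ker_mkQ]
  (quotEquivOfEq _ _ hker.symm).trans <|
    (p.mkQ.prodMap q.mkQ).quotKerEquivOfSurjective <|
      Prod.map_surjective.mpr ⟨mkQ_surjective p, mkQ_surjective q⟩

end Submodule

namespace LinearMap

variable {R V1 V2 W1 W2 : Type*} [CommRing R]
  [AddCommGroup V1] [Module R V1] [AddCommGroup V2] [Module R V2]
  [AddCommGroup W1] [Module R W1] [AddCommGroup W2] [Module R W2]

theorem comp_comp_eq_of_ker_le_s10 {a : V1 →ₗ[R] W1} {b : V1 →ₗ[R] W2} (hker : ker a ≤ ker b)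
    {g : W1 →ₗ[R] V1} (hg : a ∘ₗ g ∘ₗ a = a) : b ∘ₗ g ∘ₗ a = b := by
  ext v
  have hv : g (a v) - v ∈ ker a := by
    simpa [sub_eq_zero] using congr($hg v)
  simpa [sub_eq_zero] using hker hv

theorem range_prod_coprod_zero_coprod_of_range_le (a11 : V1 →ₗ[R] W1) (a12 : V2 →ₗ[R] W1)
    (σ : V2 →ₗ[R] W2) (hran : range a12 ≤ range a11) :
    range ((a11.coprod a12).prod ((0 : V1 →ₗ[R] W2).coprod σ)) = (range a11).prod (range σ) := by
  apply le_antisymm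
  · rintro _ ⟨⟨v1, v2⟩, rfl⟩
    obtain ⟨u, hu⟩ := hran ⟨v2, rfl⟩
    exact ⟨⟨v1 + u, by simp [hu]⟩, ⟨v2, by simp⟩⟩
  · rintro ⟨w1, w2⟩ ⟨⟨v1, rfl⟩, ⟨v2, rfl⟩⟩
    obtain ⟨u, hu⟩ := hran ⟨v2, rfl⟩
    exact ⟨(v1 - u, v2), by simp [hu]⟩

end LinearMap

theorem generalized_schur_cokernel_equiv
    {V1 V2 W1 W2 : Type*}
    [AddCommGroup V1] [Module ℝ V1] [AddCommGroup V2] [Module ℝ V2]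
    [AddCommGroup W1] [Module ℝ W1] [AddCommGroup W2] [Module ℝ W2]
    (a11 : V1 →ₗ[ℝ] W1) (a12 : V2 →ₗ[ℝ] W1)
    (a21 : V1 →ₗ[ℝ] W2) (a22 : V2 →ₗ[ℝ] W2)
    (hker : LinearMap.ker a11 ≤ LinearMap.ker a21)
    (hran : LinearMap.range a12 ≤ LinearMap.range a11)
    (g : W1 →ₗ[ℝ] V1) (hg : a11 ∘ₗ g ∘ₗ a11 = a11) :
    Nonempty
      (((W1 × W2) ⧸ LinearMap.range ((a11.coprod a12).prod (a21.coprod a22))) ≃ₗ[ℝ]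
        (W1 ⧸ LinearMap.range a11) × (W2 ⧸ LinearMap.range (a22 - a21 ∘ₗ g ∘ₗ a12))) := by
  set σ := a22 - a21 ∘ₗ g ∘ₗ a12
  let T : (W1 × W2) ≃ₗ[ℝ] (W1 × W2) :=
    (LinearEquiv.refl ℝ W1).skewProd (LinearEquiv.refl ℝ W2) (-(a21 ∘ₗ g))
  have hTS : (T : (W1 × W2) →ₗ[ℝ] W1 × W2) ∘ₗ (a11.coprod a12).prod (a21.coprod a22) =
      (a11.coprod a12).prod ((0 : V1 →ₗ[ℝ] W2).coprod σ) := by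
    have ha21 : ∀ v, a21 (g (a11 v)) = a21 v :=
      LinearMap.congr_fun (LinearMap.comp_comp_eq_of_ker_le_s10 hker hg)
    ext v <;> simp [T, σ, ha21, sub_eq_add_neg, add_comm]
  have hrange : (LinearMap.range ((a11.coprod a12).prod (a21.coprod a22))).map
      (T : (W1 × W2) →ₗ[ℝ] W1 × W2) =
      (LinearMap.range a11).prod (LinearMap.range σ) := by
    rw [← LinearMap.range_comp, hTS,
      LinearMap.range_prod_coprod_zero_coprod_of_range_le _ _ _ hran]
  exact ⟨(Submodule.Quotient.equiv _ _ T hrange).trans (Submodule.quotientProdEquiv _ _)⟩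
end

section
/- Assume the compatibility conditions ker a11 ≤ ker a21 and range a12 ≤ range a11, and let g : W1 →ₗ[ℝ] V1 satisfy a11 ∘ g ∘ a11 = a11. Set σ = a22 - a21 ∘ g ∘ a12 and let S be the block linear map S(v1, v2) = (a11 v1 + a12 v2, a21 v1 + a22 v2). Then: (i) every pair (y, 0) with y ∈ ker a11 lies in ker S, so the image of ker a11 under the embedding v1 ↦ (v1, 0) is a submodule of ker S; and (ii) the quotient of ker S by this submodule is linearly equivalent to ker σ. This is the isomorphism ker S / ker S_γ ≅ ker S' of the topological reduction theorem. -/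
/-!
The projection `(v₁, v₂) ↦ v₂` maps `ker S` onto `ker σ`, with kernel the pairs `(y, 0)`,
`y ∈ ker a₁₁`. On `ker S` we have `a₁₂ v₂ = -a₁₁ v₁`, and the generalized inverse `g` satisfies
`a₂₁ g a₁₁ = a₂₁` because `a₁₁ (g a₁₁ v - v) = 0` and `ker a₁₁ ≤ ker a₂₁`; hence `σ v₂ = 0`.
Conversely, since `a₁₂ v₂ ∈ range a₁₁`, the pair `(-g (a₁₂ v₂), v₂)` lies in `ker S` whenever
`σ v₂ = 0`.
-/

namespace BlockReduction

open LinearMap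

variable {R V₁ V₂ W₁ W₂ : Type*} [Ring R]
  [AddCommGroup V₁] [Module R V₁] [AddCommGroup V₂] [Module R V₂]
  [AddCommGroup W₁] [Module R W₁] [AddCommGroup W₂] [Module R W₂]

section GeneralizedInverse

variable {a : V₁ →ₗ[R] W₁} {g : W₁ →ₗ[R] V₁}

theorem apply_apply_of_mem_range (hg : a ∘ₗ g ∘ₗ a = a) {w : W₁} (hw : w ∈ range a) :
    a (g w) = w := by
  obtain ⟨u, rfl⟩ := hw
  exact LinearMap.congr_fun hg u

theorem apply_apply_apply_of_ker_le {b : V₁ →ₗ[R] W₂} (hg : a ∘ₗ g ∘ₗ a = a) (hker : ker a ≤ ker b)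
    (v : V₁) : b (g (a v)) = b v := by
  have hdiff : g (a v) - v ∈ ker a := by
    simp [mem_ker, apply_apply_of_mem_range hg (mem_range_self a v)]
  simpa [sub_eq_zero] using hker hdiff

end GeneralizedInverse

variable (a₁₁ : V₁ →ₗ[R] W₁) (a₁₂ : V₂ →ₗ[R] W₁) (a₂₁ : V₁ →ₗ[R] W₂) (a₂₂ : V₂ →ₗ[R] W₂)

abbrev blockMap : V₁ × V₂ →ₗ[R] W₁ × W₂ := (a₁₁.coprod a₁₂).prod (a₂₁.coprod a₂₂)

variable {a₁₁ a₁₂ a₂₁ a₂₂}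

theorem mem_ker_blockMap {p : V₁ × V₂} :
    p ∈ ker (blockMap a₁₁ a₁₂ a₂₁ a₂₂) ↔
      a₁₁ p.1 + a₁₂ p.2 = 0 ∧ a₂₁ p.1 + a₂₂ p.2 = 0 := by
  simp

theorem map_inl_ker_le_ker_blockMap (hker : ker a₁₁ ≤ ker a₂₁) :
    (ker a₁₁).map (inl R V₁ V₂) ≤ ker (blockMap a₁₁ a₁₂ a₂₁ a₂₂) := by
  rintro _ ⟨v, hv, rfl⟩
  exact mem_ker_blockMap.2 ⟨by simpa using hv, by simpa using hker hv⟩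

variable {g : W₁ →ₗ[R] V₁}

theorem snd_mem_ker_schur (hker : ker a₁₁ ≤ ker a₂₁) (hg : a₁₁ ∘ₗ g ∘ₗ a₁₁ = a₁₁)
    (p : ker (blockMap a₁₁ a₁₂ a₂₁ a₂₂)) : (p : V₁ × V₂).2 ∈ ker (a₂₂ - a₂₁ ∘ₗ g ∘ₗ a₁₂) := by
  obtain ⟨⟨v₁, v₂⟩, hp⟩ := p
  obtain ⟨h₁, h₂⟩ := mem_ker_blockMap.1 hp
  have ha₁₂ : a₁₂ v₂ = a₁₁ (-v₁) := by
    rw [map_neg, eq_neg_of_add_eq_zero_right h₁]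
  have ha₂₂ : a₂₂ v₂ = -a₂₁ v₁ := eq_neg_of_add_eq_zero_right h₂
  simp [ha₁₂, apply_apply_apply_of_ker_le hg hker, ha₂₂]

variable (a₁₂ a₂₂) in
def kerSnd (hker : ker a₁₁ ≤ ker a₂₁) (hg : a₁₁ ∘ₗ g ∘ₗ a₁₁ = a₁₁) :
    ker (blockMap a₁₁ a₁₂ a₂₁ a₂₂) →ₗ[R] ker (a₂₂ - a₂₁ ∘ₗ g ∘ₗ a₁₂) :=
  codRestrict _ (snd R V₁ V₂ ∘ₗ (ker (blockMap a₁₁ a₁₂ a₂₁ a₂₂)).subtype)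
    (snd_mem_ker_schur hker hg)

theorem kerSnd_surjective (hker : ker a₁₁ ≤ ker a₂₁) (hran : range a₁₂ ≤ range a₁₁)
    (hg : a₁₁ ∘ₗ g ∘ₗ a₁₁ = a₁₁) : Function.Surjective (kerSnd a₁₂ a₂₂ hker hg) := by
  rintro ⟨v₂, hv₂⟩
  have hga : a₁₁ (g (a₁₂ v₂)) = a₁₂ v₂ :=
    apply_apply_of_mem_range hg (hran (mem_range_self a₁₂ v₂))
  have hσ : a₂₂ v₂ = a₂₁ (g (a₁₂ v₂)) := by
    simpa [sub_eq_zero] using hv₂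
  exact ⟨⟨(-g (a₁₂ v₂), v₂), mem_ker_blockMap.2 ⟨by simp [hga], by simp [hσ]⟩⟩, rfl⟩

theorem ker_kerSnd (hker : ker a₁₁ ≤ ker a₂₁) (hg : a₁₁ ∘ₗ g ∘ₗ a₁₁ = a₁₁) :
    ker (kerSnd a₁₂ a₂₂ hker hg) =
      ((ker a₁₁).map (inl R V₁ V₂)).comap (ker (blockMap a₁₁ a₁₂ a₂₁ a₂₂)).subtype := by
  ext ⟨⟨v₁, v₂⟩, hp⟩
  simp only [mem_ker, Submodule.mem_comap, Submodule.subtype_apply, Submodule.mem_map,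
    inl_apply, Prod.mk.injEq]
  constructor
  · intro h
    obtain rfl : v₂ = 0 := congrArg Subtype.val h
    exact ⟨v₁, by simpa using (mem_ker_blockMap.1 hp).1, rfl, rfl⟩
  · rintro ⟨_, _, _, rfl⟩
    rfl

end BlockReduction

open BlockReduction in
theorem reduction_kernel_quotient_equiv
    {V1 V2 W1 W2 : Type*}
    [AddCommGroup V1] [Module ℝ V1] [AddCommGroup V2] [Module ℝ V2]
    [AddCommGroup W1] [Module ℝ W1] [AddCommGroup W2] [Module ℝ W2]
    (a11 : V1 →ₗ[ℝ] W1) (a12 : V2 →ₗ[ℝ] W1)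
    (a21 : V1 →ₗ[ℝ] W2) (a22 : V2 →ₗ[ℝ] W2)
    (hker : LinearMap.ker a11 ≤ LinearMap.ker a21)
    (hran : LinearMap.range a12 ≤ LinearMap.range a11)
    (g : W1 →ₗ[ℝ] V1) (hg : a11 ∘ₗ g ∘ₗ a11 = a11) :
    (Submodule.map (LinearMap.inl ℝ V1 V2) (LinearMap.ker a11) ≤
        LinearMap.ker ((a11.coprod a12).prod (a21.coprod a22))) ∧
      Nonempty
        ((LinearMap.ker ((a11.coprod a12).prod (a21.coprod a22)) ⧸
            Submodule.comap
              (LinearMap.ker ((a11.coprod a12).prod (a21.coprod a22))).subtype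
              (Submodule.map (LinearMap.inl ℝ V1 V2) (LinearMap.ker a11))) ≃ₗ[ℝ]
          LinearMap.ker (a22 - a21 ∘ₗ g ∘ₗ a12)) :=
  ⟨map_inl_ker_le_ker_blockMap hker,
    ⟨(Submodule.quotEquivOfEq _ _ (ker_kerSnd hker hg).symm).trans
      ((kerSnd a12 a22 hker hg).quotKerEquivOfSurjective (kerSnd_surjective hker hran hg))⟩⟩
end

section
/- Let φ1 : E → Option E' be a (pointed) edge map and let κ : (E →₀ ℝ) →ₗ[ℝ] (E' →₀ ℝ) be its linearization, i.e. the linear extension sending the basis vector of e to the basis vector of e' if φ1 e = some e' and to 0 if φ1 e = none. Let φ0 : (V → ℝ) →ₗ[ℝ] (V' → ℝ) be a linear map. Suppose that for all e : E and e' : E', φ1 e = some e' implies φ0 (s e) = s' e' and φ0 (t e) = t' e', and that φ1 e = none implies φ0 (s e) = φ0 (t e) (degenerate image). Define the stoichiometric maps S : (E →₀ ℝ) →ₗ[ℝ] (V → ℝ) as the linear extension of e ↦ t e - s e, and S' : (E' →₀ ℝ) →ₗ[ℝ] (V' → ℝ) as the linear extension of e' ↦ t' e' - s' e'. Then φ0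 ∘ S = S' ∘ κ; that is, stoichiometry sends a CRN morphism to a morphism of quiver representations (a commuting square in the arrow category of Vect). -/
theorem map_sub_eq_linearCombination_of_option {R V V' E' : Type*} [Ring R]
    [AddCommGroup V] [Module R V] [AddCommGroup V'] [Module R V']
    (φ0 : V →ₗ[R] V') (s t : V) (s' t' : E' → V') (φ1e : Option E') (κe : E' →₀ R)
    (hκsome : ∀ e' : E', φ1e = some e' → κe = Finsupp.single e' 1)
    (hκnone : φ1e = none → κe = 0)
    (hs : ∀ e' : E', φ1e = some e' → φ0 s = s' e')
    (ht : ∀ e' : E', φ1e = some e' → φ0 t = t' e')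
    (hdeg : φ1e = none → φ0 s = φ0 t) :
    φ0 (t - s) = Finsupp.linearCombination R (fun e' => t' e' - s' e') κe := by
  rw [map_sub]
  cases h : φ1e with
  | none => rw [hκnone h, map_zero, hdeg h, sub_self]
  | some e' => rw [hκsome e' h, Finsupp.linearCombination_single, one_smul, hs e' h, ht e' h]

theorem stoich_is_functorial
    {E E' V V' : Type*}
    (s t : E → V → ℝ) (s' t' : E' → V' → ℝ)
    (φ1 : E → Option E')
    (κ : (E →₀ ℝ) →ₗ[ℝ] (E' →₀ ℝ))
    (hκsome : ∀ (e : E) (e' : E'), φ1 e = some e' →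
      κ (Finsupp.single e 1) = Finsupp.single e' 1)
    (hκnone : ∀ e : E, φ1 e = none → κ (Finsupp.single e 1) = 0)
    (φ0 : (V → ℝ) →ₗ[ℝ] (V' → ℝ))
    (hs : ∀ (e : E) (e' : E'), φ1 e = some e' → φ0 (s e) = s' e')
    (ht : ∀ (e : E) (e' : E'), φ1 e = some e' → φ0 (t e) = t' e')
    (hdeg : ∀ e : E, φ1 e = none → φ0 (s e) = φ0 (t e)) :
    φ0 ∘ₗ Finsupp.linearCombination ℝ (fun e => t e - s e) =
      (Finsupp.linearCombination ℝ (fun e' => t' e' - s' e')) ∘ₗ κ := by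
  refine Finsupp.basisSingleOne.ext fun e => ?_
  rw [Finsupp.coe_basisSingleOne, LinearMap.comp_apply, LinearMap.comp_apply,
    Finsupp.linearCombination_single, one_smul]
  exact map_sub_eq_linearCombination_of_option φ0 (s e) (t e) s' t' (φ1 e) (κ (Finsupp.single e 1))
    (hκsome e) (hκnone e) (hs e) (ht e) (hdeg e)
end
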